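/- arXiv:1405.2545 — 2 statements merged into one kernel-verified Lean document; each statement's English description precedes it below -/
import Mathlib

section
/- Let W and U be finite-dimensional complex vector spaces with 2·dim W ≥ dim U + 4. Then for every alternating bilinear map B : W × W → U there exist linearly independent vectors s₁, s₂ ∈ W with B(s₁, s₂) = 0. -/
/-!
Choose bases of `W` and `U`: then `B` becomes `m = dim U` linear forms `c k` in the Plücker
coordinates `p_ij(s, t) = s_i t_j - s_j t_i`, and we need a decomposable `ω = s ∧ t ≠ 0` on
which all of them vanish. If there is none, the only common zero of the `c k` and the Plücker
relations is `0`, so by the Nullstellensatz some power `p_ij ^ (M + 1)` lies in the ideal that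
the `ℓ k = ∑ c k p • p_p` generate inside the algebra generated by the `p_ij`. Then every
monomial of degree `d` in the `p_ij` is a combination of products `ℓ ^ γ * p ^ β` with
`|γ| + |β| ≤ d` and `β ≤ M`, a space of dimension `O(d ^ m)`. But the `2 dim W - 3` coordinates
`p_01`, `p_0j`, `p_1j` are algebraically independent, which gives about `d ^ (2 dim W - 3)`
independent monomials of degree at most `d`, forcing `m ≥ 2 dim W - 3`.
-/

open MvPolynomial

namespace MvPolynomial

variable {R σ τ : Type*} [CommSemiring R]

attribute [local instance] gradedAlgebra in
theorem homogeneousComponent_mul_of_isHomogeneous {f g : MvPolynomial σ R} {e : ℕ}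
    (hg : g.IsHomogeneous e) (d : ℕ) :
    homogeneousComponent (d + e) (f * g) = homogeneousComponent d f * g := by
  have := DirectSum.coe_decompose_mul_of_right_mem_of_le (homogeneousSubmodule σ R) (a := f)
    (n := d + e) hg (Nat.le_add_left e d)
  rw [Nat.add_sub_cancel] at this
  simpa [← decomposition.decompose'_apply] using this

theorem homogeneousComponent_aeval {q : σ → MvPolynomial τ R} {e : ℕ}
    (hq : ∀ i, (q i).IsHomogeneous e) (he : e ≠ 0) (f : MvPolynomial σ R) (d : ℕ) :
    homogeneousComponent (e * d) (aeval q f) = aeval q (homogeneousComponent d f) := by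
  induction f using MvPolynomial.induction_on' with
  | monomial u c =>
    rw [homogeneousComponent_of_mem (isHomogeneous_monomial c rfl),
      homogeneousComponent_of_mem ((isHomogeneous_monomial c rfl).aeval q hq)]
    simp only [mul_eq_mul_left_iff, he, or_false]
    split_ifs <;> simp
  | add f g hf hg => simp only [map_add, hf, hg]

end MvPolynomial

theorem Finsupp.card_Iic_const_le {σ : Type*} [Fintype σ] [DecidableEq σ] (d : ℕ) :
    (Finset.Iic (Finsupp.equivFunOnFinite.symm (Function.const σ d))).card ≤
      (d + 1) ^ Fintype.card σ := by
  rw [Finsupp.card_Iic]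
  calc _ ≤ (d + 1) ^ (Finsupp.equivFunOnFinite.symm (Function.const σ d)).support.card :=
        Finset.prod_le_pow_card _ _ _ fun i _ => by simp
    _ ≤ _ := Nat.pow_le_pow_right d.succ_pos (Finset.card_le_univ _)

theorem Nat.exists_add_one_pow_mul_lt (c C m : ℕ) (hc : 1 ≤ c) :
    ∃ E, (c * E + 1) ^ m * C < (E + 1) ^ (m + 1) := by
  refine ⟨c ^ m * C, ?_⟩
  set E := c ^ m * C
  calc (c * E + 1) ^ m * C ≤ (c * (E + 1)) ^ m * C := by gcongr; nlinarith
    _ = (E + 1) ^ m * E := by rw [mul_pow]; ring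
    _ < (E + 1) ^ m * (E + 1) := Nat.mul_lt_mul_of_pos_left E.lt_succ_self (by positivity)
    _ = (E + 1) ^ (m + 1) := (pow_succ _ _).symm

namespace Plucker

section Wedge

variable {R : Type*} [CommRing R] {ι : Type*}

def wedge (s t : ι → R) (p : ι × ι) : R := s p.1 * t p.2 - s p.2 * t p.1

theorem exists_wedge_eq {K : Type*} [Field K] (ω : ι × ι → K)
    (hskew : ∀ i j, ω (j, i) = -ω (i, j))
    (hpl : ∀ i j k l, ω (i, j) * ω (k, l) - ω (i, k) * ω (j, l) + ω (i, l) * ω (j, k) = 0) :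
    ∃ s t : ι → K, wedge s t = ω := by
  by_cases h0 : ω = 0
  · exact ⟨0, 0, by ext; simp [wedge, h0]⟩
  obtain ⟨⟨a, b⟩, hab : ω (a, b) ≠ 0⟩ := Function.ne_iff.mp h0
  refine ⟨fun i => ω (i, b), fun j => ω (a, j) / ω (a, b), funext fun ⟨i, j⟩ => ?_⟩
  simp only [wedge]
  field_simp
  linear_combination (-1) * hpl i j a b + ω (i, b) * hskew j a - ω (j, b) * hskew i a

theorem linearIndependent_of_wedge_ne_zero {K V : Type*} [Field K] [AddCommGroup V] [Module K V]
    [Fintype ι] (b : Module.Basis ι K V) {s t : ι → K} (h : wedge s t ≠ 0) :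
    LinearIndependent K ![b.equivFun.symm s, b.equivFun.symm t] := by
  obtain ⟨⟨i, j⟩, hij : s i * t j - s j * t i ≠ 0⟩ := Function.ne_iff.mp h
  refine LinearIndependent.pair_iff.mpr fun a c hac => ?_
  have hcoord := congrArg b.equivFun hac
  simp only [map_add, map_smul, LinearEquiv.apply_symm_apply, map_zero] at hcoord
  have hi := congrFun hcoord i
  have hj := congrFun hcoord j
  simp only [Pi.add_apply, Pi.smul_apply, smul_eq_mul, Pi.zero_apply] at hi hj
  constructor
  · exact (mul_eq_zero.mp (by linear_combination t j * hi - t i * hj :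
      a * (s i * t j - s j * t i) = 0)).resolve_right hij
  · exact (mul_eq_zero.mp (by linear_combination s i * hj - s j * hi :
      c * (s i * t j - s j * t i) = 0)).resolve_right hij

variable (R ι) in
noncomputable def genericWedge : ι × ι → MvPolynomial (ι ⊕ ι) R :=
  wedge (fun i => X (Sum.inl i)) (fun i => X (Sum.inr i))

theorem aeval_genericWedge {S : Type*} [CommRing S] [Algebra R S] (s t : ι → S) (p : ι × ι) :
    aeval (Sum.elim s t) (genericWedge R ι p) = wedge s t p := by
  simp [genericWedge, wedge]

theorem genericWedge_isHomogeneous (p : ι × ι) : (genericWedge R ι p).IsHomogeneous 2 :=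
  ((isHomogeneous_X R _).mul (isHomogeneous_X R _)).sub
    ((isHomogeneous_X R _).mul (isHomogeneous_X R _))

end Wedge

section Nullstellensatz

variable {K : Type*} [Field K] {ι μ : Type*} [Fintype ι]

noncomputable def linearForm (c : ι × ι → K) : MvPolynomial (ι × ι) K :=
  ∑ p, C (c p) * X p

theorem linearForm_isHomogeneous (c : ι × ι → K) : (linearForm c).IsHomogeneous 1 :=
  IsHomogeneous.sum _ _ _ fun p _ => isHomogeneous_C_mul_X _ p

variable (K ι) in
noncomputable abbrev pluckerIdeal : Ideal (MvPolynomial (ι × ι) K) :=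
  RingHom.ker (aeval (genericWedge K ι))

noncomputable def linearSectionIdeal (c : μ → ι × ι → K) : Ideal (MvPolynomial (ι × ι) K) :=
  Ideal.span (Set.range fun k => linearForm (c k)) ⊔ pluckerIdeal K ι

theorem eq_zero_of_mem_zeroLocus (c : μ → ι × ι → K)
    (h : ∀ s t : ι → K, (∀ k, ∑ p, c k p * wedge s t p = 0) → wedge s t = 0)
    {ω : ι × ι → K} (hω : ω ∈ zeroLocus K (linearSectionIdeal c)) : ω = 0 := by
  have hker : ∀ f ∈ pluckerIdeal K ι, aeval ω f = 0 :=
    fun f hf => hω f (Ideal.mem_sup_right hf)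
  have hskew : ∀ i j, ω (j, i) = -ω (i, j) := by
    intro i j
    have := hker (X (i, j) + X (j, i)) (by
      simp only [RingHom.mem_ker, map_add, aeval_X, genericWedge, wedge]; ring)
    simp only [map_add, aeval_X] at this
    linear_combination this
  have hpl : ∀ i j k l, ω (i, j) * ω (k, l) - ω (i, k) * ω (j, l) + ω (i, l) * ω (j, k) = 0 := by
    intro i j k l
    have := hker (X (i, j) * X (k, l) - X (i, k) * X (j, l) + X (i, l) * X (j, k)) (by
      simp only [RingHom.mem_ker, map_add, map_sub, map_mul, aeval_X, genericWedge, wedge]; ring)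
    simpa only [map_add, map_sub, map_mul, aeval_X] using this
  obtain ⟨s, t, rfl⟩ := exists_wedge_eq ω hskew hpl
  refine h s t fun k => ?_
  simpa [linearForm] using hω _ (Ideal.mem_sup_left (Ideal.subset_span ⟨k, rfl⟩))

theorem exists_genericWedge_pow_eq_sum [IsAlgClosed K] [Fintype μ] (c : μ → ι × ι → K)
    (h : ∀ s t : ι → K, (∀ k, ∑ p, c k p * wedge s t p = 0) → wedge s t = 0) :
    ∃ M, ∀ p, ∃ g : μ → MvPolynomial (ι × ι) K, (∀ k, (g k).IsHomogeneous M) ∧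
      genericWedge K ι p ^ (M + 1) =
        ∑ k, aeval (genericWedge K ι) (g k) * aeval (genericWedge K ι) (linearForm (c k)) := by
  have hrad : Ideal.span (Set.range X) ≤ (linearSectionIdeal c).radical := by
    rw [Ideal.span_le]
    rintro _ ⟨p, rfl⟩
    rw [SetLike.mem_coe, ← vanishingIdeal_zeroLocus_eq_radical (K := K), mem_vanishingIdeal_iff]
    intro ω hω
    simp [eq_zero_of_mem_zeroLocus c h hω]
  obtain ⟨M, hM⟩ := Ideal.exists_pow_le_of_le_radical_of_fg hrad
    (Submodule.fg_span (Set.finite_range _))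
  refine ⟨M, fun p => ?_⟩
  have hp : X p ^ (M + 1) ∈ linearSectionIdeal c :=
    hM (Ideal.pow_le_pow_right M.le_succ
      (Ideal.pow_mem_pow (Ideal.subset_span (Set.mem_range_self p)) _))
  obtain ⟨y, hy, z, hz, hyz⟩ := Submodule.mem_sup.mp hp
  obtain ⟨f, rfl⟩ := Ideal.mem_span_range_iff_exists_fun.mp hy
  refine ⟨fun k => homogeneousComponent M (f k),
    fun k => homogeneousComponent_isHomogeneous _ _, ?_⟩
  have hsum : genericWedge K ι p ^ (M + 1) =
      ∑ k, aeval (genericWedge K ι) (f k) * aeval (genericWedge K ι) (linearForm (c k)) := by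
    have hz0 : aeval (genericWedge K ι) z = 0 := hz
    have := congrArg (aeval (genericWedge K ι)) hyz
    simp only [map_add, hz0, add_zero, map_sum, map_mul, map_pow, aeval_X] at this
    exact this.symm
  -- The left side is homogeneous of degree `2 (M + 1)` and each `ℓ k` of degree `2`.
  calc genericWedge K ι p ^ (M + 1)
      = homogeneousComponent (2 * M + 2) (genericWedge K ι p ^ (M + 1)) :=
        (homogeneousComponent_eq_self ((genericWedge_isHomogeneous p).pow _)).symm
    _ = _ := by
        rw [hsum, map_sum]
        refine Finset.sum_congr rfl fun k _ => ?_
        rw [homogeneousComponent_mul_of_isHomogeneous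
          ((linearForm_isHomogeneous (c k)).aeval _ genericWedge_isHomogeneous),
          homogeneousComponent_aeval genericWedge_isHomogeneous two_ne_zero]

end Nullstellensatz

section Counting

variable {R A σ μ : Type*} [CommSemiring R] [CommSemiring A] [Algebra R A]

variable (R) in
def boundedProducts (q : σ → A) (ℓ : μ → A) (M d : ℕ) : Set A :=
  {x | ∃ (γ : μ →₀ ℕ) (β : σ →₀ ℕ), (∀ p, β p ≤ M) ∧ γ.degree + β.degree ≤ d ∧
    x = aeval ℓ (monomial γ (1 : R)) * aeval q (monomial β (1 : R))}

theorem mul_mem_span_boundedProducts {q : σ → A} {ℓ : μ → A} {M d : ℕ} (k : μ) {x : A}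
    (hx : x ∈ Submodule.span R (boundedProducts R q ℓ M d)) :
    ℓ k * x ∈ Submodule.span R (boundedProducts R q ℓ M (d + 1)) := by
  suffices Submodule.span R (boundedProducts R q ℓ M d) ≤
      (Submodule.span R (boundedProducts R q ℓ M (d + 1))).comap (LinearMap.mulLeft R (ℓ k)) from
    this hx
  rw [Submodule.span_le]
  rintro _ ⟨γ, β, hβ, hdeg, rfl⟩
  refine Submodule.subset_span ⟨Finsupp.single k 1 + γ, β, hβ, ?_, ?_⟩
  · rw [map_add, Finsupp.degree_single]
    omega
  · rw [LinearMap.mulLeft_apply, monomial_single_add, pow_one, map_mul, aeval_X, mul_assoc]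

theorem monomial_mem_span_boundedProducts [Fintype μ] (q : σ → A) (ℓ : μ → A) (M : ℕ)
    (hq : ∀ p, ∃ g : μ → MvPolynomial σ R, (∀ k, (g k).IsHomogeneous M) ∧
      q p ^ (M + 1) = ∑ k, aeval q (g k) * ℓ k)
    (d : ℕ) (ν : σ →₀ ℕ) (hν : ν.degree ≤ d) :
    aeval q (monomial ν (1 : R)) ∈ Submodule.span R (boundedProducts R q ℓ M d) := by
  induction d generalizing ν with
  | zero =>
    exact Submodule.subset_span ⟨0, ν, fun p => ((ν.le_degree p).trans hν).trans M.zero_le,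
      by simpa using hν, by simp⟩
  | succ d ih =>
    by_cases hβ : ∀ p, ν p ≤ M
    · exact Submodule.subset_span ⟨0, ν, hβ, by simpa using hν, by simp⟩
    obtain ⟨p, hp⟩ := not_forall.mp hβ
    obtain ⟨g, hg, hpow⟩ := hq p
    obtain ⟨ν, rfl⟩ : ∃ ν', ν = ν' + Finsupp.single p (M + 1) :=
      ⟨_, (tsub_add_cancel_of_le (Finsupp.single_le_iff.mpr (by omega))).symm⟩
    rw [map_add, Finsupp.degree_single] at hν
    rw [monomial_add_single, map_mul, map_pow, aeval_X, hpow, Finset.mul_sum]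
    refine Submodule.sum_mem _ fun k _ => ?_
    rw [mul_comm (aeval q (g k)), mul_left_comm, mul_comm (aeval q (monomial ν 1))]
    refine mul_mem_span_boundedProducts k ?_
    rw [(g k).as_sum, map_sum, Finset.sum_mul]
    refine Submodule.sum_mem _ fun δ hδ => ?_
    have hδ : δ.degree = M := ((hg k).degree_eq_sum_deg_support hδ).symm
    have hterm : aeval q (monomial δ (coeff δ (g k))) * aeval q (monomial ν (1 : R)) =
        coeff δ (g k) • aeval q (monomial (δ + ν) (1 : R)) := by
      rw [← map_mul, monomial_mul, mul_one, ← map_smul, smul_monomial, smul_eq_mul, mul_one]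
    rw [hterm]
    exact Submodule.smul_mem _ _ (ih _ (by rw [map_add]; omega))

theorem card_le_of_forall_mem_span_boundedProducts {K A ι : Type*} [Field K] [CommRing A]
    [Algebra K A] [Fintype σ] [Fintype μ] [Fintype ι] {q : σ → A} {ℓ : μ → A} {M d : ℕ} {v : ι → A}
    (hv : LinearIndependent K v)
    (hmem : ∀ i, v i ∈ Submodule.span K (boundedProducts K q ℓ M d)) :
    Fintype.card ι ≤ (d + 1) ^ Fintype.card μ * (M + 1) ^ Fintype.card σ := by
  classical
  let F : Finset A := (Finset.Iic (Finsupp.equivFunOnFinite.symm (Function.const μ d)) ×ˢ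
      Finset.Iic (Finsupp.equivFunOnFinite.symm (Function.const σ M))).image
    fun γβ => aeval ℓ (monomial γβ.1 (1 : K)) * aeval q (monomial γβ.2 (1 : K))
  have hsub : boundedProducts K q ℓ M d ⊆ F := by
    rintro _ ⟨γ, β, hβ, hdeg, rfl⟩
    refine Finset.mem_image.mpr ⟨(γ, β), Finset.mem_product.mpr ⟨?_, ?_⟩, rfl⟩ <;>
      refine Finset.mem_Iic.mpr fun i => ?_
    · exact (γ.le_degree i).trans (by simp; omega)
    · simpa using hβ i
  have hv' : LinearIndependent K fun i => (⟨v i, Submodule.span_mono hsub (hmem i)⟩ :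
      Submodule.span K (F : Set A)) :=
    LinearIndependent.of_comp (Submodule.span K (F : Set A)).subtype hv
  calc Fintype.card ι ≤ Module.finrank K (Submodule.span K (F : Set A)) :=
        hv'.fintype_card_le_finrank
    _ ≤ F.card := finrank_span_finset_le_card F
    _ ≤ _ := Finset.card_image_le.trans (by
        rw [Finset.card_product]
        exact Nat.mul_le_mul (Finsupp.card_Iic_const_le d) (Finsupp.card_Iic_const_le M))

end Counting

section Chart

variable {R : Type*} [CommRing R] {κ : Type*} [Fintype κ]

/-- The coordinates `p₀₁`, `p₀ⱼ`, `p₁ⱼ`, where `none` and `some none` play the roles of `0`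
and `1`. -/
def chart : Option (κ ⊕ κ) → Option (Option κ) × Option (Option κ)
  | none => (none, some none)
  | some (Sum.inl j) => (none, some (some j))
  | some (Sum.inr j) => (some none, some (some j))

noncomputable def chartExponent (e : Option (κ ⊕ κ) →₀ ℕ) : Option (κ ⊕ κ) →₀ ℕ :=
  e + Finsupp.single none (∑ j, e (some (Sum.inr j)))

theorem chartExponent_injective : Function.Injective (chartExponent (κ := κ)) := by
  intro e e' h
  have hsome : ∀ v, e (some v) = e' (some v) := fun v => by
    simpa [chartExponent] using DFunLike.congr_fun h (some v)
  ext (_ | v)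
  · simpa [chartExponent, hsome] using DFunLike.congr_fun h none
  · exact hsome v

theorem chartExponent_add (e f : Option (κ ⊕ κ) →₀ ℕ) :
    chartExponent (e + f) = chartExponent e + chartExponent f := by
  simp only [chartExponent, Finsupp.coe_add, Pi.add_apply, Finset.sum_add_distrib,
    Finsupp.single_add]
  abel

/-- With `z = X none`, `yⱼ = X (inl j)` and `xⱼ = X (inr j)`, the pair `(chartLeft, chartRight)`
has `p₀₁ = z`, `p₀ⱼ = yⱼ` and `p₁ⱼ = xⱼ z`, so it sends each monomial in the chart coordinates
to a single monomial. -/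
noncomputable def chartLeft : Option (Option κ) → MvPolynomial (Option (κ ⊕ κ)) R
  | none => 1
  | some none => 0
  | some (some j) => -X (some (Sum.inr j))

noncomputable def chartRight : Option (Option κ) → MvPolynomial (Option (κ ⊕ κ)) R
  | none => 0
  | some none => X none
  | some (some j) => X (some (Sum.inl j))

theorem aeval_aeval_chart_monomial (e : Option (κ ⊕ κ) →₀ ℕ) :
    aeval (Sum.elim (chartLeft (R := R)) chartRight)
      (aeval (fun v => genericWedge R _ (chart v)) (monomial e (1 : R))) =
      monomial (chartExponent e) (1 : R) := by
  rw [← AlgHom.comp_apply, comp_aeval]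
  simp only [aeval_genericWedge]
  induction e using Finsupp.induction_linear with
  | zero => simp [chartExponent]
  | add f g hf hg =>
    rw [← mul_one (1 : R), ← monomial_mul, map_mul, hf, hg, monomial_mul, chartExponent_add]
  | single v n =>
    rw [← X_pow_eq_monomial, map_pow, aeval_X]
    classical
    rcases v with _ | j | j <;>
      simp [wedge, chart, chartLeft, chartRight, chartExponent, X_pow_eq_monomial, mul_pow,
        monomial_mul, Finsupp.single_apply]

theorem linearIndependent_aeval_chart_monomial :
    LinearIndependent R fun e : Option (κ ⊕ κ) →₀ ℕ =>
      aeval (fun v => genericWedge R _ (chart v)) (monomial e (1 : R)) := by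
  refine LinearIndependent.of_comp
    (aeval (R := R) (Sum.elim (chartLeft (R := R)) chartRight)).toLinearMap ?_
  have h : (aeval (R := R) (Sum.elim (chartLeft (R := R)) chartRight)).toLinearMap ∘
      (fun e => aeval (fun v => genericWedge R _ (chart v)) (monomial e (1 : R))) =
      ⇑(basisMonomials (Option (κ ⊕ κ)) R) ∘ chartExponent := by
    funext e
    simp only [Function.comp_apply, AlgHom.toLinearMap_apply, aeval_aeval_chart_monomial,
      coe_basisMonomials]
  rw [h]
  exact (basisMonomials _ R).linearIndependent.comp _ chartExponent_injective

end Chart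

theorem exists_wedge_ne_zero {K : Type*} [Field K] [IsAlgClosed K] {κ μ : Type*} [Fintype κ]
    [Fintype μ] (c : μ → Option (Option κ) × Option (Option κ) → K)
    (hμ : Fintype.card μ ≤ 2 * Fintype.card κ) :
    ∃ s t : Option (Option κ) → K, (∀ k, ∑ p, c k p * wedge s t p = 0) ∧ wedge s t ≠ 0 := by
  classical
  by_contra! h
  obtain ⟨M, hM⟩ := exists_genericWedge_pow_eq_sum c h
  set n := Fintype.card (Option (κ ⊕ κ))
  obtain ⟨E, hE⟩ := Nat.exists_add_one_pow_mul_lt n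
    ((M + 1) ^ Fintype.card (Option (Option κ) × Option (Option κ))) (Fintype.card μ)
    (by simp [n])
  let box : (Option (κ ⊕ κ) → Fin (E + 1)) → Option (κ ⊕ κ) →₀ ℕ :=
    fun x => Finsupp.equivFunOnFinite.symm fun v => x v
  have hbox : Function.Injective box :=
    Finsupp.equivFunOnFinite.symm.injective.comp Fin.val_injective.comp_left
  have hcard := card_le_of_forall_mem_span_boundedProducts (M := M) (d := n * E)
    ((linearIndependent_aeval_chart_monomial (R := K)).comp box hbox) fun x => by
      rw [Function.comp_apply, show (fun v => genericWedge K _ (chart v)) =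
        genericWedge K _ ∘ chart from rfl, ← aeval_rename, rename_monomial]
      refine monomial_mem_span_boundedProducts _ _ M hM _ _ ?_
      rw [Finsupp.degree_mapDomain, Finsupp.degree_eq_sum]
      exact (Finset.sum_le_card_nsmul _ _ E fun v _ => by simpa [box] using (x v).is_le).trans
        (by simp [n])
  have hpow : (E + 1) ^ (Fintype.card μ + 1) ≤ (E + 1) ^ n :=
    Nat.pow_le_pow_right E.succ_pos (by simp [n]; omega)
  rw [Fintype.card_fun, Fintype.card_fin] at hcard
  exact (hcard.trans_lt (hE.trans_le hpow)).false

section Coordinates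

variable {K W U ι μ : Type*} [Field K] [AddCommGroup W] [Module K W] [AddCommGroup U] [Module K U]
  [Fintype ι] (bW : Module.Basis ι K W) (bU : Module.Basis μ K U) (B : W →ₗ[K] W →ₗ[K] U)

theorem repr_apply_equivFun_symm (s t : ι → K) (k : μ) :
    bU.repr (B (bW.equivFun.symm s) (bW.equivFun.symm t)) k =
      ∑ p : ι × ι, s p.1 * t p.2 * bU.repr (B (bW p.1) (bW p.2)) k := by
  simp only [Module.Basis.equivFun_symm_apply, map_sum, map_smul, LinearMap.sum_apply,
    LinearMap.smul_apply, Finsupp.coe_finsetSum, Finset.sum_apply, Finsupp.smul_apply,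
    smul_eq_mul, Fintype.sum_prod_type, Finset.mul_sum, mul_assoc]
  rw [Finset.sum_comm]
  exact Finset.sum_congr rfl fun _ _ => Finset.sum_congr rfl fun _ _ => by ring

theorem sum_repr_mul_wedge (s t : ι → K) (k : μ) :
    ∑ p, bU.repr (B (bW p.1) (bW p.2)) k * wedge s t p =
      bU.repr (B (bW.equivFun.symm s) (bW.equivFun.symm t) -
        B (bW.equivFun.symm t) (bW.equivFun.symm s)) k := by
  rw [map_sub, Finsupp.sub_apply, repr_apply_equivFun_symm, repr_apply_equivFun_symm,
    ← Finset.sum_sub_distrib]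
  exact Finset.sum_congr rfl fun p _ => by simp only [wedge]; ring

end Coordinates

end Plucker

/-- Grassmannian argument: if `2 dim W ≥ dim U + 4`, every alternating bilinear
map `B : W × W → U` vanishes on some pair of linearly independent vectors. -/
theorem stmt_4 (W U : Type*) [AddCommGroup W] [Module ℂ W] [FiniteDimensional ℂ W]
    [AddCommGroup U] [Module ℂ U] [FiniteDimensional ℂ U]
    (hdim : 2 * Module.finrank ℂ W ≥ Module.finrank ℂ U + 4)
    (B : W →ₗ[ℂ] W →ₗ[ℂ] U) (halt : ∀ w : W, B w w = 0) :
    ∃ s₁ s₂ : W, LinearIndependent ℂ ![s₁, s₂] ∧ B s₁ s₂ = 0 := by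
  set n := Module.finrank ℂ W - 2
  have e : Fin (Module.finrank ℂ W) ≃ Option (Option (Fin n)) :=
    Fintype.equivOfCardEq (by simp [n]; omega)
  let bW := (Module.finBasis ℂ W).reindex e
  let bU := Module.finBasis ℂ U
  obtain ⟨s, t, hst, hne⟩ := Plucker.exists_wedge_ne_zero
    (fun k p => bU.repr (B (bW p.1) (bW p.2)) k) (by simp; omega)
  refine ⟨bW.equivFun.symm s, bW.equivFun.symm t, Plucker.linearIndependent_of_wedge_ne_zero bW hne,
    bU.repr.injective (Finsupp.ext fun k => ?_)⟩
  have h2 := hst k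
  rw [Plucker.sum_repr_mul_wedge, ← LinearMap.IsAlt.neg halt (bW.equivFun.symm s),
    sub_neg_eq_add, ← two_smul ℂ, map_smul, Finsupp.smul_apply, smul_eq_mul] at h2
  rw [map_zero, Finsupp.zero_apply]
  exact (mul_eq_zero.mp h2).resolve_left two_ne_zero
end

section
/- Let g ≥ 2 and let M be the free ℤ-module with basis a₁, …, a_g, b₁, …, b_g equipped with the alternating ℤ-bilinear form ω determined by ω(aᵢ, bⱼ) = δᵢⱼ and ω(aᵢ, aⱼ) = ω(bᵢ, bⱼ) = 0. Let χ : M → M be a ℤ-linear map and m an integer with ω(χ(x), χ(y)) = m·ω(x, y) for all x, y ∈ M. Suppose there are integers l, n with n ≠ 0, integers s₂, …, s_g and t₁, …, t_g such that χ(a₁) = l·a₁, χ(aᵢ) = n·aᵢ + sᵢ·a₁ for 2 ≤ i ≤ g, and χ(bᵢ) = n·bᵢ + tᵢ·a₁ for 1 ≤ i ≤ g. Then m = n², l = n, and sᵢ = 0 and tᵢ = 0 for all 2 ≤ i ≤ g. -/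
/-!
Every identity comes from evaluating `ω(χx, χy) = m·ω(x, y)` on one pair of basis vectors.
Since `a₁` is isotropic and orthogonal to every `aᵢ` and `bᵢ` with `i ≥ 2`, the correction
terms `sᵢ·a₁`, `tᵢ·a₁` contribute only through `ω(a₁, b₁) = 1`. The pair `(a₂, b₂)` gives
`m = n²`, the pair `(a₁, b₁)` gives `l·n = m`, and the pairs `(aᵢ, b₁)`, `(bᵢ, b₁)` give
`sᵢ·n = 0` and `tᵢ·n = 0`.
-/

section Shear

variable {M : Type*} [AddCommGroup M] [Module ℤ M]

theorem LinearMap.apply_smul_add_smul_smul_add_smul (ω : M →ₗ[ℤ] M →ₗ[ℤ] ℤ)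
    (x y u : M) (n c d : ℤ) :
    ω (n • x + c • u) (n • y + d • u) =
      n ^ 2 * ω x y + n * d * ω x u + c * n * ω u y + c * d * ω u u := by
  simp only [map_add, LinearMap.map_smul_of_tower, LinearMap.add_apply, LinearMap.smul_apply,
    Int.zsmul_eq_mul]
  ring

theorem mul_apply_eq_of_apply_eq_smul_add_smul (ω : M →ₗ[ℤ] M →ₗ[ℤ] ℤ) {χ : M →ₗ[ℤ] M}
    {m n c d : ℤ} {x y u : M} (hχ : ∀ z w, ω (χ z) (χ w) = m * ω z w)
    (hx : χ x = n • x + c • u) (hy : χ y = n • y + d • u)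
    (hxu : ω x u = 0) (huu : ω u u = 0) :
    m * ω x y = n ^ 2 * ω x y + c * n * ω u y := by
  rw [← hχ, hx, hy, ω.apply_smul_add_smul_smul_add_smul, hxu, huu]
  ring

end Shear

/-- Symplectic-lattice computation of Section 6: on the symplectic ℤ-lattice of
rank `2g` (`g ≥ 2`) with symplectic basis `a₁,…,a_g,b₁,…,b_g`, a linear map `χ`
multiplying the symplectic form by `m` and satisfying `χ(a₁) = l·a₁`,
`χ(aᵢ) = n·aᵢ + sᵢ·a₁` (`i ≥ 2`), `χ(bᵢ) = n·bᵢ + tᵢ·a₁`, with `n ≠ 0`, must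
have `m = n²`, `l = n`, and `sᵢ = tᵢ = 0` for `i ≥ 2`. -/
theorem stmt_8 (g : ℕ) (hg : 2 ≤ g)
    (M : Type*) [AddCommGroup M] [Module ℤ M]
    (a b : Fin g → M)
    (ω : M →ₗ[ℤ] M →ₗ[ℤ] ℤ)
    (hab : ∀ i j, ω (a i) (b j) = if i = j then 1 else 0)
    (haa : ∀ i j, ω (a i) (a j) = 0)
    (hbb : ∀ i j, ω (b i) (b j) = 0)
    (halt : ∀ z : M, ω z z = 0)
    (χ : M →ₗ[ℤ] M) (m l n : ℤ) (hn : n ≠ 0)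
    (hsymp : ∀ z w : M, ω (χ z) (χ w) = m * ω z w)
    (s t : Fin g → ℤ)
    (ha1 : χ (a ⟨0, by omega⟩) = l • a ⟨0, by omega⟩)
    (hai : ∀ i : Fin g, i ≠ ⟨0, by omega⟩ →
      χ (a i) = n • a i + s i • a ⟨0, by omega⟩)
    (hbi : ∀ i : Fin g, χ (b i) = n • b i + t i • a ⟨0, by omega⟩) :
    m = n ^ 2 ∧ l = n ∧
      ∀ i : Fin g, i ≠ (⟨0, by omega⟩ : Fin g) → s i = 0 ∧ t i = 0 := by
  set i₀ : Fin g := ⟨0, by omega⟩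
  set i₁ : Fin g := ⟨1, by omega⟩
  have hi₁ : i₁ ≠ i₀ := by simp [i₀, i₁]
  have hm : m = n ^ 2 := by
    simpa [hab, hi₁.symm] using
      mul_apply_eq_of_apply_eq_smul_add_smul ω hsymp (hai i₁ hi₁) (hbi i₁) (haa _ _) (haa _ _)
  have hl : l = n := by
    have ha₀ : χ (a i₀) = n • a i₀ + (l - n) • a i₀ := by rw [ha1, ← add_zsmul, add_sub_cancel]
    have h := mul_apply_eq_of_apply_eq_smul_add_smul ω hsymp ha₀ (hbi i₀) (haa _ _) (haa _ _)
    simp only [hab, if_true, mul_one, hm, left_eq_add] at h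
    exact sub_eq_zero.mp ((mul_eq_zero.mp h).resolve_right hn)
  refine ⟨hm, hl, fun i hi => ⟨?_, ?_⟩⟩
  · have h := mul_apply_eq_of_apply_eq_smul_add_smul ω hsymp (hai i hi) (hbi i₀) (haa _ _)
      (haa _ _)
    simp only [hab, hi, if_false, if_true, mul_zero, mul_one, zero_add] at h
    exact (mul_eq_zero.mp h.symm).resolve_right hn
  · have hba : ω (b i) (a i₀) = 0 := (LinearMap.IsAlt.eq_iff halt).mp (by simp [hab, hi.symm])
    have h := mul_apply_eq_of_apply_eq_smul_add_smul ω hsymp (hbi i) (hbi i₀) hba (haa _ _)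
    simp only [hab, hbb, if_true, mul_zero, mul_one, zero_add] at h
    exact (mul_eq_zero.mp h.symm).resolve_right hn
end
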